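/- The number of words of length n (n ≥ 1) over {A,B,C,D} that start with A, contain exactly one letter B, no other letter A, and whose letters in positions other than the initial A and the single B lie in {C,D} with the constraint that the letter immediately before B is not C, equals the coefficient of x^n in x·(x/(1-2x)+1)·x·(1/(1-2x)). -/

import Mathlib

/-!
An admissible word is `A u B v` with `u, v` words in `C, D`, and the condition on the letter
before `B` says exactly that `u` does not end in `C`. Such `u` of length `i` are counted by the
coefficient of `x^i` in `x/(1-2x) + 1` (empty, or any word followed by `D`), the words `v` of
length `j` by that of `1/(1-2x)`, and the two factors `x` account for `A` and `B`.
-/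

/-- `oneBSegCount n` counts words of length `n` over `{A,B,C,D}` starting with `A`,
containing exactly one `B`, no other `A`, all other letters in `{C, D}`, and in which
the letter immediately preceding the `B` is not a `C`. -/
noncomputable def oneBSegCount (n : ℕ) : ℕ :=
  Nat.card {w : List (Fin 4) // w.length = n ∧
    (∃ t : List (Fin 4), w = (0 : Fin 4) :: t ∧ (0 : Fin 4) ∉ t ∧
      t.count (1 : Fin 4) = 1) ∧
    ∀ i : ℕ, w[i + 1]? = some (1 : Fin 4) → w[i]? ≠ some (2 : Fin 4)}

namespace List

variable {α : Type*}

theorem exists_eq_append_cons_of_count_eq_one [DecidableEq α] {a : α} {l : List α}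
    (h : l.count a = 1) : ∃ s t, l = s ++ a :: t ∧ a ∉ s ∧ a ∉ t := by
  obtain ⟨s, t, rfl⟩ := append_of_mem (count_pos_iff.1 (h ▸ Nat.one_pos))
  rw [count_append, count_cons_self] at h
  exact ⟨s, t, rfl, count_eq_zero.1 (by omega), count_eq_zero.1 (by omega)⟩

theorem forall_getElem?_succ_iff_isChain {a b : α} {l : List α} :
    (∀ i : ℕ, l[i + 1]? = some b → l[i]? ≠ some a) ↔ l.IsChain (fun x y => y = b → x ≠ a) := by
  rw [isChain_iff_getElem]
  constructor
  · rintro h i hi rfl hx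
    exact h i (by simp [hi]) (by simp [hx, (by omega : i < l.length)])
  · intro h i hb ha
    obtain ⟨hi, rfl⟩ := getElem?_eq_some_iff.1 hb
    obtain ⟨_, rfl⟩ := getElem?_eq_some_iff.1 ha
    exact h i hi rfl rfl

end List

namespace PowerSeries

theorem inv_one_sub_C_mul_X {k : Type*} [Field k] (a : k) :
    (1 - C a * X : k⟦X⟧)⁻¹ = mk (a ^ ·) := by
  rw [inv_eq_iff_mul_eq_one (by simp)]
  simpa [rescale_mk] using congrArg (rescale a) (mk_one_mul_one_sub_eq_one (S := k))

end PowerSeries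

namespace OneBSeg

/-- The letters `A, B, C, D` are `0, 1, 2, 3 : Fin 4`; `false, true` encode `C, D`. -/
def cd (b : Bool) : Fin 4 := if b then 3 else 2

theorem cd_injective : Function.Injective cd := by decide

theorem mem_range_cd {x : Fin 4} : x ∈ Set.range cd ↔ x ≠ 0 ∧ x ≠ 1 := by
  fin_cases x <;> simp [cd]

theorem cd_ne_zero (b : Bool) : cd b ≠ 0 := (mem_range_cd.1 ⟨b, rfl⟩).1

theorem cd_ne_one (b : Bool) : cd b ≠ 1 := (mem_range_cd.1 ⟨b, rfl⟩).2

theorem zero_notMem_map_cd (u : List Bool) : 0 ∉ u.map cd := by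
  simp [cd_ne_zero]

theorem one_notMem_map_cd (u : List Bool) : 1 ∉ u.map cd := by
  simp [cd_ne_one]

theorem exists_map_cd_eq {l : List (Fin 4)} (h0 : 0 ∉ l) (h1 : 1 ∉ l) :
    ∃ u : List Bool, u.map cd = l := by
  change l ∈ Set.range (List.map cd)
  rw [Set.range_list_map]
  exact fun x hx => mem_range_cd.2 ⟨ne_of_mem_of_not_mem hx h0, ne_of_mem_of_not_mem hx h1⟩

def IsOneBSeg (w : List (Fin 4)) : Prop :=
  (∃ t : List (Fin 4), w = 0 :: t ∧ 0 ∉ t ∧ t.count 1 = 1) ∧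
    ∀ i : ℕ, w[i + 1]? = some 1 → w[i]? ≠ some 2

theorem oneBSegCount_eq_card (n : ℕ) :
    oneBSegCount n = Nat.card {w : List (Fin 4) // w.length = n ∧ IsOneBSeg w} := rfl

theorem isChain_cons_map_cd (a : Fin 4) (u : List Bool) :
    (a :: u.map cd).IsChain (fun x y => y = 1 → x ≠ 2) := by
  rw [List.isChain_iff_getElem]
  intro i _ h
  simp only [List.getElem_cons_succ, List.getElem_map] at h
  exact absurd h (cd_ne_one _)

theorem isChain_iff_getLast?_ne (u v : List Bool) :
    (0 :: (u.map cd ++ 1 :: v.map cd)).IsChain (fun x y => y = 1 → x ≠ 2) ↔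
      u.getLast? ≠ some false := by
  rw [← List.cons_append, List.isChain_append]
  simp only [isChain_cons_map_cd, true_and, List.getLast?_cons, List.getLast?_map, List.head?_cons]
  rcases u.getLast? with _ | _ | _ <;> simp [cd]

theorem isOneBSeg_iff {w : List (Fin 4)} :
    IsOneBSeg w ↔
      ∃ u v : List Bool, w = 0 :: (u.map cd ++ 1 :: v.map cd) ∧ u.getLast? ≠ some false := by
  rw [IsOneBSeg, List.forall_getElem?_succ_iff_isChain]
  constructor
  · rintro ⟨⟨t, rfl, h0, h1⟩, hchain⟩
    obtain ⟨s, r, rfl, hs, hr⟩ := List.exists_eq_append_cons_of_count_eq_one h1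
    obtain ⟨u, rfl⟩ := exists_map_cd_eq (fun h => h0 (List.mem_append_left _ h)) hs
    obtain ⟨v, rfl⟩ := exists_map_cd_eq (fun h => h0 (by simp [h])) hr
    exact ⟨u, v, rfl, (isChain_iff_getLast?_ne u v).1 hchain⟩
  · rintro ⟨u, v, rfl, hu⟩
    refine ⟨⟨_, rfl, ?_, ?_⟩, (isChain_iff_getLast?_ne u v).2 hu⟩
    · simp [zero_notMem_map_cd]
    · simp [List.count_append, List.count_eq_zero.2 (one_notMem_map_cd _)]


open Finset

abbrev Prefix (k : ℕ) : Type := {u : List.Vector Bool k // u.toList.getLast? ≠ some false}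

theorem card_prefix_zero : Fintype.card (Prefix 0) = 1 := by decide

theorem card_prefix_succ (k : ℕ) : Fintype.card (Prefix (k + 1)) = 2 ^ k := by
  let snocTrue (v : List.Vector Bool k) : Prefix (k + 1) :=
    ⟨⟨v.toList ++ [true], by simp⟩, by simp⟩
  have hbij : Function.Bijective snocTrue := by
    refine ⟨fun v v' h => List.Vector.toList_injective ?_, fun ⟨⟨l, hl⟩, hlast⟩ => ?_⟩
    · simpa [snocTrue] using congrArg (fun u : Prefix (k + 1) => u.1.toList) h
    · obtain ⟨l', b, rfl⟩ := (List.eq_nil_or_concat' l).resolve_left (by rintro rfl; simp at hl)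
      obtain rfl : b = true := by simpa using hlast
      exact ⟨⟨l', by simpa using hl⟩, rfl⟩
  rw [← Fintype.card_of_bijective hbij, card_vector, Fintype.card_bool]

abbrev Decomp (m : ℕ) : Type :=
  Σ p : antidiagonal m, Prefix p.1.1 × List.Vector Bool p.1.2

def Decomp.word {m : ℕ} (d : Decomp m) :
    {w : List (Fin 4) // w.length = m + 2 ∧ IsOneBSeg w} :=
  ⟨0 :: (d.2.1.1.toList.map cd ++ 1 :: d.2.2.toList.map cd), by
    obtain ⟨⟨p, hp⟩, ⟨u, hu⟩, v⟩ := d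
    refine ⟨?_, isOneBSeg_iff.2 ⟨u.toList, v.toList, rfl, hu⟩⟩
    simp only [List.length_cons, List.length_append, List.length_map, List.Vector.toList_length]
    rw [HasAntidiagonal.mem_antidiagonal] at hp
    omega⟩

theorem Decomp.word_bijective (m : ℕ) : Function.Bijective (Decomp.word (m := m)) := by
  constructor
  · rintro ⟨⟨⟨i, j⟩, hij⟩, ⟨u, hu⟩, v⟩ ⟨⟨⟨i', j'⟩, hij'⟩, ⟨u', hu'⟩, v'⟩ h
    obtain ⟨hu, -, hv⟩ := (List.append_cons_inj_of_notMem (one_notMem_map_cd _)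
      (one_notMem_map_cd _)).1 (List.cons.inj (congrArg Subtype.val h)).2
    have hu := List.map_injective_iff.2 cd_injective hu
    have hv := List.map_injective_iff.2 cd_injective hv
    obtain rfl : i = i' := by simpa using congrArg List.length hu
    obtain rfl : j = j' := by simpa using congrArg List.length hv
    obtain rfl := List.Vector.toList_injective hu
    obtain rfl := List.Vector.toList_injective hv
    rfl
  · rintro ⟨w, hlen, hw⟩
    obtain ⟨u, v, rfl, hu⟩ := isOneBSeg_iff.1 hw
    refine ⟨⟨⟨(u.length, v.length), ?_⟩, ⟨⟨u, rfl⟩, hu⟩, ⟨v, rfl⟩⟩, rfl⟩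
    simp only [List.length_cons, List.length_append, List.length_map] at hlen
    simp only [HasAntidiagonal.mem_antidiagonal]
    omega

theorem oneBSegCount_add_two (m : ℕ) :
    oneBSegCount (m + 2) = ∑ p ∈ antidiagonal m, Fintype.card (Prefix p.1) * 2 ^ p.2 := by
  rw [oneBSegCount_eq_card, ← Nat.card_eq_of_bijective _ (Decomp.word_bijective m),
    Nat.card_eq_fintype_card, Fintype.card_sigma]
  simp only [Fintype.card_prod, card_vector, Fintype.card_bool]
  exact sum_coe_sort (antidiagonal m) fun p => Fintype.card (Prefix p.1) * 2 ^ p.2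

theorem oneBSegCount_of_lt_two {n : ℕ} (hn : n < 2) : oneBSegCount n = 0 := by
  rw [oneBSegCount_eq_card, Nat.card_eq_zero]
  refine Or.inl ⟨fun ⟨w, hlen, hw⟩ => ?_⟩
  obtain ⟨u, v, rfl, -⟩ := isOneBSeg_iff.1 hw
  simp only [List.length_cons, List.length_append] at hlen
  omega

open PowerSeries in
theorem coeff_X_mul_mk_two_pow_add_one (i : ℕ) :
    coeff i (X * PowerSeries.mk (2 ^ ·) + 1 : ℚ⟦X⟧) = Fintype.card (Prefix i) := by
  cases i with
  | zero => rw [card_prefix_zero]; simp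
  | succ k => rw [card_prefix_succ]; simp [coeff_succ_X_mul]

end OneBSeg

open PowerSeries in
theorem oneBSegCount_formula :
    ∀ n : ℕ, 1 ≤ n →
      (oneBSegCount n : ℚ) =
        PowerSeries.coeff (R := ℚ) n
          (X * (X * (1 - 2 * X)⁻¹ + 1) * X * (1 - 2 * X)⁻¹) := by
  intro n _
  rw [← map_ofNat C 2, inv_one_sub_C_mul_X,
    show ∀ g : ℚ⟦X⟧, X * (X * g + 1) * X * g = X ^ 2 * ((X * g + 1) * g) by intro; ring,
    coeff_X_pow_mul']
  split_ifs with hn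
  · obtain ⟨m, rfl⟩ := Nat.exists_eq_add_of_le' hn
    rw [Nat.add_sub_cancel, OneBSeg.oneBSegCount_add_two, coeff_mul]
    push_cast
    exact Finset.sum_congr rfl fun p _ => by rw [OneBSeg.coeff_X_mul_mk_two_pow_add_one, coeff_mk]
  · rw [OneBSeg.oneBSegCount_of_lt_two (by omega), Nat.cast_zero]
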